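/- Derivative formula for the generalized Gauss–Bonnet Hawking mass (key identity in the proof of Proposition 3.2). Let n ≥ 3, λ ≥ 0, α > 0, α̃ = (n−2)(n−3)·α, r₊ > 0, and let V, k_I, k_S be spherically symmetric radial data on [r₊,∞) (V, k_S differentiable with differentiable m_H, V > 0 on (r₊,∞)) satisfying the radial Gauss–Bonnet constraints with matter energy density μ̃ and radial momentum density J̃_ν. Then for every r > r₊: m_GB′(r) = (8π·r^{n−1}/(n−1))·[ μ̃(r) − (k_S(r)/H(r))·J̃_ν(r) ]. -/

import Mathlib

open Real Filter

/-- Mean curvature of the coordinate sphere of radius `r`: `H = (n-1)√(V r)/r`. -/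
noncomputable def sphMeanCurv (n : ℕ) (V : ℝ → ℝ) (r : ℝ) : ℝ :=
  ((n : ℝ) - 1) * Real.sqrt (V r) / r

/-- Scalar curvature of `g = V⁻¹dr² + r²·(round metric)`:
`R = (n-1) r^{1-n} (d/dr)[r^{n-2}(1 - V)]`. -/
noncomputable def sphScalCurv (n : ℕ) (V : ℝ → ℝ) (r : ℝ) : ℝ :=
  ((n : ℝ) - 1) / r ^ (n - 1) * deriv (fun ρ => ρ ^ (n - 2) * (1 - V ρ)) r

/-- The Hawking mass `m_H(r) = (r^{n-2}/2)[1 - V + r² k_S²/(n-1)²]`. -/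
noncomputable def hawkingMass (n : ℕ) (V kS : ℝ → ℝ) (r : ℝ) : ℝ :=
  r ^ (n - 2) / 2 * (1 - V r + r ^ 2 * kS r ^ 2 / ((n : ℝ) - 1) ^ 2)

/-- The generalized Gauss–Bonnet Hawking mass
`m_GB(r) = m_H(r) + λ r^n/2 + 2 α̃ m_H(r)²/r^n`. -/
noncomputable def gbHawkingMass (n : ℕ) (lam ta : ℝ) (V kS : ℝ → ℝ) (r : ℝ) : ℝ :=
  hawkingMass n V kS r + lam * r ^ n / 2 + 2 * ta * (hawkingMass n V kS r) ^ 2 / r ^ n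

/-- `N₁ = H·[k_I - k_S/(n-1) - r k_S'/(n-1)]`. -/
noncomputable def gbN1 (n : ℕ) (V kI kS : ℝ → ℝ) (r : ℝ) : ℝ :=
  sphMeanCurv n V r *
    (kI r - kS r / ((n : ℝ) - 1) - r * deriv kS r / ((n : ℝ) - 1))

/-- `𝓜 = R + (k_I + k_S)² - k_I² - k_S²/(n-1)`. -/
noncomputable def gbM (n : ℕ) (V kI kS : ℝ → ℝ) (r : ℝ) : ℝ :=
  sphScalCurv n V r + (kI r + kS r) ^ 2 - kI r ^ 2 - kS r ^ 2 / ((n : ℝ) - 1)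

/-- `μ̃⁽ᵅ⁾ = (n-1)(n-2)(n-3)·(8 m_H/r^n)·[m_H'/r^{n-1} - n m_H/(2 r^n) + (k_S/(n-1)) N₁/H]`. -/
noncomputable def gbMuAlpha (n : ℕ) (V kI kS : ℝ → ℝ) (r : ℝ) : ℝ :=
  ((n : ℝ) - 1) * ((n : ℝ) - 2) * ((n : ℝ) - 3) * (8 * hawkingMass n V kS r / r ^ n) *
    (deriv (hawkingMass n V kS) r / r ^ (n - 1)
      - (n : ℝ) * hawkingMass n V kS r / (2 * r ^ n)
      + kS r / ((n : ℝ) - 1) * gbN1 n V kI kS r / sphMeanCurv n V r)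

/-- `J̃⁽ᵅ⁾_ν = 2 N₁ (n-2)(n-3) m_H/r^n`. -/
noncomputable def gbJAlpha (n : ℕ) (V kI kS : ℝ → ℝ) (r : ℝ) : ℝ :=
  2 * gbN1 n V kI kS r * ((n : ℝ) - 2) * ((n : ℝ) - 3) * hawkingMass n V kS r / r ^ n

/-! Writing `m_H = ½[r^{n-2}(1 - V) + r^n k_S²/(n-1)²]`, the definition of `R` gives
`m_H' = r^{n-1}/(2(n-1)) · (𝓜 - 2 (k_S/H) N₁)`, and the Gauss–Bonnet part of `m_GB'` is
`4 α̃ (m_H/r^n) (m_H' - n m_H/(2r))`. In the combination `μ̃ - (k_S/H) J̃_ν` of the two constraints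
the `N₁`-terms of `μ̃⁽ᵅ⁾` and `J̃⁽ᵅ⁾_ν` cancel, and what is left of `μ̃⁽ᵅ⁾` is exactly that
Gauss–Bonnet part. -/

section

variable {n : ℕ} {V kI kS : ℝ → ℝ} {r : ℝ}

theorem sphMeanCurv_ne_zero (hn : n ≠ 1) (hr : r ≠ 0) (hV : 0 < V r) :
    sphMeanCurv n V r ≠ 0 := by
  have : (n : ℝ) - 1 ≠ 0 := sub_ne_zero.mpr (mod_cast hn)
  have := Real.sqrt_pos.mpr hV
  unfold sphMeanCurv
  positivity

theorem gbM_sub_gbN1 (hn : n ≠ 1) (hH : sphMeanCurv n V r ≠ 0) :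
    gbM n V kI kS r - 2 * (kS r / sphMeanCurv n V r) * gbN1 n V kI kS r =
      sphScalCurv n V r + (n * kS r ^ 2 + 2 * r * kS r * deriv kS r) / ((n : ℝ) - 1) := by
  have : (n : ℝ) - 1 ≠ 0 := sub_ne_zero.mpr (mod_cast hn)
  rw [gbM, gbN1]
  field_simp
  ring

theorem hawkingMass_eq (hn : 2 ≤ n) :
    hawkingMass n V kS =
      fun ρ => (ρ ^ (n - 2) * (1 - V ρ) + ρ ^ n * kS ρ ^ 2 / ((n : ℝ) - 1) ^ 2) / 2 := by
  obtain ⟨k, rfl⟩ : ∃ k, n = k + 2 := ⟨n - 2, by omega⟩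
  ext ρ
  simp only [hawkingMass, Nat.add_sub_cancel]
  ring

theorem hasDerivAt_hawkingMass (hn : 2 ≤ n) (hr : r ≠ 0) (hV : 0 < V r)
    (hVd : DifferentiableAt ℝ V r) (hkSd : DifferentiableAt ℝ kS r) :
    HasDerivAt (hawkingMass n V kS)
      (r ^ (n - 1) / (2 * ((n : ℝ) - 1)) *
        (gbM n V kI kS r - 2 * (kS r / sphMeanCurv n V r) * gbN1 n V kI kS r)) r := by
  have hn1 : (n : ℝ) - 1 ≠ 0 := sub_ne_zero.mpr (by norm_cast; omega)
  rw [gbM_sub_gbN1 (by omega) (sphMeanCurv_ne_zero (by omega) hr hV), hawkingMass_eq hn]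
  have hR : HasDerivAt (fun ρ => ρ ^ (n - 2) * (1 - V ρ))
      (deriv (fun ρ => ρ ^ (n - 2) * (1 - V ρ)) r) r :=
    ((differentiableAt_pow _).fun_mul ((differentiableAt_const _).fun_sub hVd)).hasDerivAt
  have hS : HasDerivAt (fun ρ => ρ ^ n * kS ρ ^ 2)
      (n * r ^ (n - 1) * kS r ^ 2 + r ^ n * (2 * kS r * deriv kS r)) r := by
    simpa using (hasDerivAt_pow n r).fun_mul (hkSd.hasDerivAt.fun_pow 2)
  refine ((hR.add (hS.div_const (((n : ℝ) - 1) ^ 2))).div_const 2).congr_deriv ?_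
  obtain ⟨k, rfl⟩ : ∃ k, n = k + 1 := ⟨n - 1, by omega⟩
  rw [sphScalCurv, Nat.add_sub_cancel]
  field_simp
  ring

theorem hasDerivAt_gbHawkingMass (lam ta : ℝ) {m' : ℝ} (hr : r ≠ 0)
    (h : HasDerivAt (hawkingMass n V kS) m' r) :
    HasDerivAt (gbHawkingMass n lam ta V kS)
      (m' + n * lam * r ^ (n - 1) / 2 +
        4 * ta * hawkingMass n V kS r / r ^ n * (m' - n * hawkingMass n V kS r / (2 * r))) r := by
  have hpow := hasDerivAt_pow n r
  refine ((h.add ((hpow.const_mul lam).div_const 2)).add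
    (((h.fun_pow 2).const_mul (2 * ta)).div hpow (pow_ne_zero n hr))).congr_deriv ?_
  rcases n with _ | k
  · simp
    ring
  · simp only [Nat.add_sub_cancel]
    field_simp
    ring

theorem gbMuAlpha_sub_gbJAlpha (hn : n ≠ 1) :
    gbMuAlpha n V kI kS r - 4 * (kS r / sphMeanCurv n V r) * gbJAlpha n V kI kS r =
      8 * ((n : ℝ) - 1) * ((n : ℝ) - 2) * ((n : ℝ) - 3) * hawkingMass n V kS r / r ^ n *
        (deriv (hawkingMass n V kS) r / r ^ (n - 1) - n * hawkingMass n V kS r / (2 * r ^ n)) := by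
  have : (n : ℝ) - 1 ≠ 0 := sub_ne_zero.mpr (mod_cast hn)
  rw [gbMuAlpha, gbJAlpha]
  field_simp
  ring

end

theorem gbHawkingMass_deriv_general (n : ℕ) (hn : 3 ≤ n) (lam α ta rp : ℝ)
    (hta : ta = ((n : ℝ) - 2) * ((n : ℝ) - 3) * α) (hrp : 0 < rp)
    (V kI kS μ J : ℝ → ℝ)
    (hVpos : ∀ r, rp < r → 0 < V r)
    (hVd : ∀ r, rp < r → DifferentiableAt ℝ V r)
    (hkSd : ∀ r, rp < r → DifferentiableAt ℝ kS r)
    -- Gauss–Bonnet Hamiltonian constraint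
    (hmu : ∀ r, rp < r → 16 * π * μ r =
      gbM n V kI kS r + (n : ℝ) * ((n : ℝ) - 1) * lam + α * gbMuAlpha n V kI kS r)
    -- Gauss–Bonnet momentum constraint
    (hJ : ∀ r, rp < r → 8 * π * J r = gbN1 n V kI kS r + 2 * α * gbJAlpha n V kI kS r) :
    ∀ r, rp < r →
      HasDerivAt (gbHawkingMass n lam ta V kS)
        (8 * π * r ^ (n - 1) / ((n : ℝ) - 1) *
          (μ r - kS r / sphMeanCurv n V r * J r)) r := by
  intro r hr
  have hr0 : r ≠ 0 := (hrp.trans hr).ne'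
  have hmH := hasDerivAt_hawkingMass (kI := kI) (by omega : 2 ≤ n) hr0 (hVpos r hr) (hVd r hr)
    (hkSd r hr)
  have hcombined : 16 * π * (μ r - kS r / sphMeanCurv n V r * J r) =
      (gbM n V kI kS r - 2 * (kS r / sphMeanCurv n V r) * gbN1 n V kI kS r) +
        n * ((n : ℝ) - 1) * lam +
        α * (gbMuAlpha n V kI kS r - 4 * (kS r / sphMeanCurv n V r) * gbJAlpha n V kI kS r) := by
    linear_combination hmu r hr - 2 * (kS r / sphMeanCurv n V r) * hJ r hr
  rw [gbMuAlpha_sub_gbJAlpha (by omega), hmH.deriv] at hcombined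
  refine (hasDerivAt_gbHawkingMass lam ta hr0 hmH).congr_deriv ?_
  rw [show ∀ x, 8 * π * r ^ (n - 1) / ((n : ℝ) - 1) * x =
      r ^ (n - 1) / ((n : ℝ) - 1) / 2 * (16 * π * x) by intro x; ring, hcombined, hta]
  obtain ⟨k, rfl⟩ : ∃ k, n = k + 1 := ⟨n - 1, by omega⟩
  have hk : (k : ℝ) ≠ 0 := by norm_cast; omega
  simp only [Nat.add_sub_cancel, Nat.cast_add, Nat.cast_one, add_sub_cancel_right]
  field_simp
  ring

/-- Derivative formula for the generalized Gauss–Bonnet Hawking mass (key identity in the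
proof of Proposition 3.2): under the radial Gauss–Bonnet constraints with matter energy
density `μ̃` and radial momentum density `J̃_ν`, for `r > r₊`:
`m_GB'(r) = (8π r^{n-1}/(n-1))·[ μ̃(r) - (k_S(r)/H(r))·J̃_ν(r) ]`. -/
theorem gbHawkingMass_deriv (n : ℕ) (hn : 3 ≤ n) (lam α ta rp : ℝ) (hlam : 0 ≤ lam)
    (hα : 0 < α) (hta : ta = ((n : ℝ) - 2) * ((n : ℝ) - 3) * α) (hrp : 0 < rp)
    (V kI kS μ J : ℝ → ℝ)
    (hVpos : ∀ r, rp < r → 0 < V r)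
    (hVd : ∀ r, rp < r → DifferentiableAt ℝ V r)
    (hkSd : ∀ r, rp < r → DifferentiableAt ℝ kS r)
    (hmHd : ∀ r, rp < r → DifferentiableAt ℝ (hawkingMass n V kS) r)
    -- Gauss–Bonnet Hamiltonian constraint
    (hmu : ∀ r, rp < r → 16 * π * μ r =
      gbM n V kI kS r + (n : ℝ) * ((n : ℝ) - 1) * lam + α * gbMuAlpha n V kI kS r)
    -- Gauss–Bonnet momentum constraint
    (hJ : ∀ r, rp < r → 8 * π * J r = gbN1 n V kI kS r + 2 * α * gbJAlpha n V kI kS r) :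
    ∀ r, rp < r →
      HasDerivAt (gbHawkingMass n lam ta V kS)
        (8 * π * r ^ (n - 1) / ((n : ℝ) - 1) *
          (μ r - kS r / sphMeanCurv n V r * J r)) r :=
  gbHawkingMass_deriv_general n hn lam α ta rp hta hrp V kI kS μ J hVpos hVd hkSd hmu hJ
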